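/- Let A be symmetric positive definite on ℝᵐ and b ∈ ℝᵐ, b ≠ 0. For k ≥ 1 let K_k := span(b, A b, ..., A^{k-1} b) be the order-k Krylov subspace, and let x_k be the minimizer of x ↦ (1/2)⟨x, A x⟩ - ⟨b, x⟩ over K_k. Then ⟨x_k, b⟩ > 0. -/
import Mathlib


open RealInnerProductSpace

theorem krylov_minimizer_descent
    {m : ℕ} (A : EuclideanSpace ℝ (Fin m) →ₗ[ℝ] EuclideanSpace ℝ (Fin m))
    (hsym : A.IsSymmetric)
    (hpos : ∀ x, x ≠ 0 → 0 < ⟪x, A x⟫)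
    (b : EuclideanSpace ℝ (Fin m)) (hb : b ≠ 0)
    (k : ℕ) (hk : 1 ≤ k)
    (xk : EuclideanSpace ℝ (Fin m))
    (hmem : xk ∈ Submodule.span ℝ (Set.range fun i : Fin k => (A ^ (i : ℕ)) b))
    (hmin : ∀ x ∈ Submodule.span ℝ (Set.range fun i : Fin k => (A ^ (i : ℕ)) b),
      (1 / 2) * ⟪xk, A xk⟫ - ⟪b, xk⟫ ≤ (1 / 2) * ⟪x, A x⟫ - ⟪b, x⟫) :
    0 < ⟪xk, b⟫ := by
  have hbAb : 0 < ⟪b, A b⟫ := hpos b hb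
  set t : ℝ := ⟪b, b⟫ / ⟪b, A b⟫ with ht
  have hbb : 0 < ⟪b, b⟫ := by
    have h := norm_pos_iff.mpr hb
    rw [real_inner_self_eq_norm_sq]
    positivity
  have hbmem : b ∈ Submodule.span ℝ (Set.range fun i : Fin k => (A ^ (i : ℕ)) b) := by
    have : (A ^ ((⟨0, hk⟩ : Fin k) : ℕ)) b = b := by simp
    rw [← this]
    exact Submodule.subset_span ⟨⟨0, hk⟩, rfl⟩
  have htb : t • b ∈ Submodule.span ℝ (Set.range fun i : Fin k => (A ^ (i : ℕ)) b) :=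
    Submodule.smul_mem _ t hbmem
  have h1 := hmin (t • b) htb
  have hval : (1 / 2) * ⟪t • b, A (t • b)⟫ - ⟪b, t • b⟫ = -(1/2) * (⟪b, b⟫^2 / ⟪b, A b⟫) := by
    rw [map_smul]
    simp only [real_inner_smul_left, real_inner_smul_right, ht]
    have hc : ⟪b, A b⟫ ≠ 0 := ne_of_gt hbAb
    generalize ⟪b, b⟫ = a at *
    generalize ⟪b, A b⟫ = c at *
    field_simp
    ring
  have hneg : (1 / 2) * ⟪xk, A xk⟫ - ⟪b, xk⟫ < 0 := by
    rw [hval] at h1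
    refine lt_of_le_of_lt h1 ?_
    have : 0 < ⟪b, b⟫^2 / ⟪b, A b⟫ := div_pos (pow_pos hbb 2) hbAb
    linarith
  have hAxk : 0 ≤ ⟪xk, A xk⟫ := by
    by_cases h : xk = 0
    · simp [h]
    · exact le_of_lt (hpos xk h)
  have : 0 < ⟪b, xk⟫ := by linarith
  rwa [real_inner_comm]
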